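/- The least fixpoints of the operators on interpretations satisfy lfp(Γ_s Γ) = lfp(Γ_s Γ_s) ⊆ lfp(Γ Γ) ⊆ lfp(Γ Γ_s), corresponding via the argumentation equivalence to J_{a/u} = J_{a/a} ⊆ J_{u/u} ⊆ J_{u/a}. -/

import Mathlib

/-- Objective literals: atoms and their explicit negations. -/
inductive Lit : Type where
  | pos : String → Lit
  | neg : String → Lit
deriving DecidableEq

/-- Explicit negation of an objective literal (`¬¬L = L`). -/
def Lit.compl : Lit → Lit
  | .pos a => .neg a
  | .neg a => .pos a

/-- A rule `head ← pos, not neg` of an extended logic program: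
`pos` are the objective body literals and `neg` the default-negated ones. -/
structure Rule where
  head : Lit
  pos : List Lit
  neg : List Lit

/-- An extended logic program is a set of rules. -/
abbrev Program := Set Rule

/-- An argument for `P`: a finite sequence of rules of `P` such that every
objective literal in the body of a rule is the head of a later rule. -/
def IsArg (P : Program) (A : List Rule) : Prop :=
  (∀ r ∈ A, r ∈ P) ∧
  ∀ i : Fin A.length, ∀ L ∈ (A.get i).pos,
    ∃ k : Fin A.length, i < k ∧ (A.get k).head = L

/-- The conclusions of an argument: the heads of its rules. -/
def conc (A : List Rule) : Set Lit := {L | ∃ r ∈ A, r.head = L}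

/-- The assumptions of an argument: the objective literals `L` such that
`not L` occurs in the body of one of its rules. -/
def assm (A : List Rule) : Set Lit := {L | ∃ r ∈ A, L ∈ r.neg}

/-- `A` is a minimal argument for `L`: no proper subargument of `A` has
conclusion `L`. -/
def MinimalArgFor (P : Program) (A : List Rule) (L : Lit) : Prop :=
  IsArg P A ∧ L ∈ conc A ∧
  ∀ B : List Rule, B.Sublist A → B ≠ A → IsArg P B → L ∉ conc B

/-- The set of minimal arguments of `P`. -/
def Args (P : Program) : Type := {A : List Rule // ∃ L, MinimalArgFor P A L}

/-- `A` undercuts `B`: some conclusion `L` of `A` is an assumption `not L` of `B`. -/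
def undercuts {P : Program} (A B : Args P) : Prop :=
  ∃ L, L ∈ conc A.1 ∧ L ∈ assm B.1

/-- `A` rebuts `B`: some conclusion `L` of `A` has `¬L` a conclusion of `B`. -/
def rebuts {P : Program} (A B : Args P) : Prop :=
  ∃ L, L ∈ conc A.1 ∧ L.compl ∈ conc B.1

/-- `A` attacks `B` iff `A` undercuts or rebuts `B`. -/
def attacks {P : Program} (A B : Args P) : Prop := undercuts A B ∨ rebuts A B

/-- `A` defeats `B` iff `A` undercuts `B`, or `A` rebuts `B` and `B` does not
undercut `A`. -/
def defeats {P : Program} (A B : Args P) : Prop :=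
  undercuts A B ∨ (rebuts A B ∧ ¬ undercuts B A)

/-- `A` strongly undercuts `B` iff `A` undercuts `B` and `B` does not undercut `A`. -/
def sundercuts {P : Program} (A B : Args P) : Prop :=
  undercuts A B ∧ ¬ undercuts B A

/-- The set of `x/y`-acceptable arguments with respect to `S`. -/
def Facc {Arg : Type*} (x y : Arg → Arg → Prop) (S : Set Arg) : Set Arg :=
  {A | ∀ B, x B A → ∃ C ∈ S, y C B}

theorem Facc_mono {Arg : Type*} (x y : Arg → Arg → Prop) : Monotone (Facc x y) := by
  intro S T hST A hA B hB
  obtain ⟨C, hC, hCB⟩ := hA B hB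
  exact ⟨C, hST hC, hCB⟩

/-- `Facc` as an order homomorphism. -/
def Fhom {Arg : Type*} (x y : Arg → Arg → Prop) : Set Arg →o Set Arg :=
  ⟨Facc x y, Facc_mono x y⟩

/-- The set of `x/y`-justified arguments. -/
def Jlfp {Arg : Type*} (x y : Arg → Arg → Prop) : Set Arg :=
  OrderHom.lfp (Fhom x y)

/-- Derivability in the least model of the GL-transformation `P/I`:
rules whose default-negated body literals avoid `I` may fire. -/
inductive GammaDeriv (P : Program) (I : Set Lit) : Lit → Prop where
  | step (r : Rule) (hr : r ∈ P) (hneg : ∀ L ∈ r.neg, L ∉ I)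
      (hpos : ∀ L ∈ r.pos, GammaDeriv P I L) : GammaDeriv P I r.head

/-- The Gelfond–Lifschitz operator `Γ_P`. -/
def Gamma (P : Program) (I : Set Lit) : Set Lit := {L | GammaDeriv P I L}

/-- The semi-normal version of `P`: each rule `L ← Body` becomes
`L ← not ¬L, Body`. -/
def seminormal (P : Program) : Program :=
  {r' | ∃ r ∈ P, r' = ⟨r.head, r.pos, r.head.compl :: r.neg⟩}

/-- `Γ_s`, the `Γ` operator of the semi-normal program. -/
def GammaS (P : Program) (I : Set Lit) : Set Lit := Gamma (seminormal P) I

theorem Gamma_anti (P : Program) : ∀ {I I' : Set Lit}, I ⊆ I' → Gamma P I' ⊆ Gamma P I := by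
  intro I I' h L hL
  induction hL with
  | step r hr hneg hpos ih =>
      exact GammaDeriv.step r hr (fun L hL hI => hneg L hL (h hI)) ih

/-- The monotone operator `I ↦ Γ_P (Γ_Q I)`. -/
def GammaComp (P Q : Program) : Set Lit →o Set Lit :=
  ⟨fun I => Gamma P (Gamma Q I), fun _ _ h => Gamma_anti P (Gamma_anti Q h)⟩


/-!
Both hierarchies follow from two facts about least fixpoints: `lfp` is monotone in the
operator, and if `f ≤ g` while `g` maps `lfp f` into itself, then `lfp f = lfp g`. The
inclusions are pointwise comparisons of operators: `Γ_s I ⊆ Γ I` since a semi-normal rule only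
adds a default-negated body literal, and `Γ` is antitone; undercuts are attacks, and `F_{x/y}`
is antitone in `x` and monotone in `y`. For the equalities, the extra premise `not ¬L` of a
semi-normal rule never blocks at `A = lfp (Γ_s Γ)`: if `¬L ∈ A` was derived semi-normally then
`L ∉ Γ A`, so `Γ A ⊆ Γ_s A`. Likewise a rebuttal of `B` by a justified `C` is a rebuttal of `C`
by `B`, and then `C`, being `a/u`-acceptable, gives a justified undercutter of `B`.
-/

theorem OrderHom.lfp_eq_lfp_of_le {α : Type*} [CompleteLattice α] {f g : α →o α}
    (hfg : f ≤ g) (hg : g (lfp f) ≤ lfp f) : lfp f = lfp g :=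
  le_antisymm (lfp.monotone hfg) (lfp_le g hg)

@[simp]
theorem Lit.compl_compl (L : Lit) : L.compl.compl = L := by
  cases L <;> rfl

theorem Gamma_seminormal_subset (P : Program) (I : Set Lit) :
    Gamma (seminormal P) I ⊆ Gamma P I := by
  intro L hL
  induction hL with
  | step r' hr' hneg _ ih =>
      obtain ⟨r, hr, rfl⟩ := hr'
      exact GammaDeriv.step r hr (fun M hM => hneg M (List.mem_cons_of_mem _ hM)) ih

theorem compl_notMem_of_mem_Gamma_seminormal {P : Program} {I : Set Lit} {L : Lit}
    (hL : L ∈ Gamma (seminormal P) I) : L.compl ∉ I := by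
  cases hL with
  | step r' hr' hneg _ =>
      obtain ⟨r, _, rfl⟩ := hr'
      exact hneg _ List.mem_cons_self

theorem Gamma_subset_Gamma_seminormal {P : Program} {I : Set Lit}
    (hI : ∀ L ∈ I, L.compl ∉ Gamma P I) : Gamma P I ⊆ Gamma (seminormal P) I := by
  intro L hL
  induction hL with
  | step r hr hneg hpos ih =>
      refine GammaDeriv.step ⟨r.head, r.pos, r.head.compl :: r.neg⟩ ⟨r, hr, rfl⟩ ?_ ih
      intro M hM
      rcases List.mem_cons.mp hM with rfl | hM
      · refine fun hcompl => hI _ hcompl ?_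
        rw [Lit.compl_compl]
        exact GammaDeriv.step r hr hneg hpos
      · exact hneg M hM

theorem Gamma_subset_Gamma_seminormal_of_subset {P : Program} {I : Set Lit}
    (hI : I ⊆ Gamma (seminormal P) (Gamma P I)) : Gamma P I ⊆ Gamma (seminormal P) I :=
  Gamma_subset_Gamma_seminormal fun _ hL => by
    simpa using compl_notMem_of_mem_Gamma_seminormal (hI hL)

theorem GammaComp_seminormal_left_le (P Q : Program) :
    GammaComp (seminormal P) Q ≤ GammaComp P Q :=
  fun _ => Gamma_seminormal_subset P _

theorem GammaComp_le_seminormal_right (P Q : Program) :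
    GammaComp P Q ≤ GammaComp P (seminormal Q) :=
  fun _ => Gamma_anti P (Gamma_seminormal_subset Q _)

theorem GammaComp_seminormal_map_lfp_le (P : Program) :
    GammaComp (seminormal P) (seminormal P) (OrderHom.lfp (GammaComp (seminormal P) P)) ≤
      OrderHom.lfp (GammaComp (seminormal P) P) := by
  set A := OrderHom.lfp (GammaComp (seminormal P) P)
  have hA : Gamma (seminormal P) (Gamma P A) = A := (GammaComp (seminormal P) P).map_lfp
  calc Gamma (seminormal P) (Gamma (seminormal P) A)
      ⊆ Gamma (seminormal P) (Gamma P A) :=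
        Gamma_anti _ (Gamma_subset_Gamma_seminormal_of_subset hA.ge)
    _ = A := hA

section Acceptability

variable {Arg : Type*} {x x' y y' : Arg → Arg → Prop}

theorem Fhom_anti_left (hx : ∀ A B, x A B → x' A B) : Fhom x' y ≤ Fhom x y :=
  fun _ A hA B hB => hA B (hx B A hB)

theorem Fhom_mono_right (hy : ∀ A B, y A B → y' A B) : Fhom x y ≤ Fhom x y' :=
  fun _ _ hA B hB => (hA B hB).imp fun _ ⟨hC, hCB⟩ => ⟨hC, hy _ _ hCB⟩

theorem Facc_subset_Facc_of_attacked_back {u : Arg → Arg → Prop}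
    (hback : ∀ C B, x C B → u C B ∨ x B C) {S : Set Arg} (hS : S ⊆ Facc x u S) :
    Facc x x S ⊆ Facc x u S := by
  intro A hA B hBA
  obtain ⟨C, hC, hCB⟩ := hA B hBA
  rcases hback C B hCB with hu | hBC
  · exact ⟨C, hC, hu⟩
  · exact hS hC B hBC

theorem Jlfp_eq_Jlfp_of_attacked_back {u : Arg → Arg → Prop} (hux : ∀ A B, u A B → x A B)
    (hback : ∀ C B, x C B → u C B ∨ x B C) : Jlfp x u = Jlfp x x := by
  refine OrderHom.lfp_eq_lfp_of_le (Fhom_mono_right hux) ?_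
  have hJ : Facc x u (Jlfp x u) = Jlfp x u := (Fhom x u).map_lfp
  calc Facc x x (Jlfp x u) ⊆ Facc x u (Jlfp x u) :=
        Facc_subset_Facc_of_attacked_back hback hJ.ge
    _ = Jlfp x u := hJ

end Acceptability

theorem rebuts_symm {P : Program} {A B : Args P} (h : rebuts A B) : rebuts B A := by
  obtain ⟨L, hA, hB⟩ := h
  exact ⟨L.compl, hB, by simpa using hA⟩

theorem undercuts_or_attacks_of_attacks {P : Program} {A B : Args P} (h : attacks A B) :
    undercuts A B ∨ attacks B A :=
  h.imp_right fun hr => Or.inr (rebuts_symm hr)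

/-- Ordering of the least fixpoints of the compositions of `Γ` and `Γ_s`,
corresponding to the argumentation semantics
`J_{a/u} = J_{a/a} ⊆ J_{u/u} ⊆ J_{u/a}`. -/
theorem gamma_lfp_hierarchy (P : Program) :
    (OrderHom.lfp (GammaComp (seminormal P) P) =
      OrderHom.lfp (GammaComp (seminormal P) (seminormal P)) ∧
     OrderHom.lfp (GammaComp (seminormal P) (seminormal P)) ⊆
      OrderHom.lfp (GammaComp P P) ∧
     OrderHom.lfp (GammaComp P P) ⊆
      OrderHom.lfp (GammaComp P (seminormal P))) ∧
    (Jlfp (attacks (P := P)) undercuts = Jlfp attacks attacks ∧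
     Jlfp (attacks (P := P)) attacks ⊆ Jlfp undercuts undercuts ∧
     Jlfp (undercuts (P := P)) undercuts ⊆ Jlfp undercuts attacks) := by
  have hΓ := OrderHom.lfp_eq_lfp_of_le (GammaComp_le_seminormal_right (seminormal P) P)
    (GammaComp_seminormal_map_lfp_le P)
  have hJ : Jlfp (attacks (P := P)) undercuts = Jlfp attacks attacks :=
    Jlfp_eq_Jlfp_of_attacked_back (fun _ _ => Or.inl) fun _ _ => undercuts_or_attacks_of_attacks
  refine ⟨⟨hΓ, ?_, ?_⟩, hJ, ?_, ?_⟩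
  · exact hΓ ▸ OrderHom.lfp.monotone (GammaComp_seminormal_left_le P P)
  · exact OrderHom.lfp.monotone (GammaComp_le_seminormal_right P P)
  · exact hJ ▸ OrderHom.lfp.monotone (Fhom_anti_left fun _ _ => Or.inl)
  · exact OrderHom.lfp.monotone (Fhom_mono_right fun _ _ => Or.inl)
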